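/- Let (C, τ^C) and (Θ, τ^Θ) be compact Hausdorff spaces and let U : Θ × C → ℝ be jointly continuous. Then the correspondence Φ : Θ × CL(C) ⇒ C defined by Φ(θ, D) := argmax_{d ∈ D} U(θ, d) is jointly upper hemicontinuous (equivalently, since C is compact, it has closed graph) and has nonempty compact values, where Θ × CL(C) carries the product of τ^Θ and the Fell topology τ_F. -/

import Mathlib

/-- The hyperspace of nonempty closed subsets of a topological space. -/
def CL (C : Type*) [TopologicalSpace C] : Type _ :=
  {A : Set C // A.Nonempty ∧ IsClosed A}

/-- The subbase for the Fell topology: all sets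
`V⁻ = {A : A ∩ V ≠ ∅}` and `W⁺ = {A : A ⊆ W}` for `V`, `W` nonempty open. -/
def fellSubbasis (C : Type*) [TopologicalSpace C] : Set (Set (CL C)) :=
  {s | (∃ V : Set C, IsOpen V ∧ V.Nonempty ∧ s = {A : CL C | (A.1 ∩ V).Nonempty}) ∨
       (∃ W : Set C, IsOpen W ∧ W.Nonempty ∧ s = {A : CL C | A.1 ⊆ W})}

/-- The Fell topology on the hyperspace of nonempty closed subsets. -/
instance fellTopology (C : Type*) [TopologicalSpace C] : TopologicalSpace (CL C) :=
  TopologicalSpace.generateFrom (fellSubbasis C)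

/-- The agent's indirect utility over menus: `U*(θ, D) = sup_{d ∈ D} U(θ, d)`. -/
noncomputable def Ustar {Θ C : Type*} [TopologicalSpace C]
    (U : Θ × C → ℝ) (θ : Θ) (D : CL C) : ℝ :=
  sSup ((fun d => U (θ, d)) '' D.1)


/-- The agent's argmax correspondence:
`Φ(θ, D) = {d ∈ D : U(θ, d) = sup_{d' ∈ D} U(θ, d')}`. -/
noncomputable def Phi {Θ C : Type*} [TopologicalSpace C]
    (U : Θ × C → ℝ) (θ : Θ) (D : CL C) : Set C :=
  {d ∈ D.1 | U (θ, d) = Ustar U θ D}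

/-!
Lower semicontinuity of the value `U*` in `(θ, D)` comes from the hit sets `V⁻`: if
`U(θ₀, d) > r` at some `d ∈ D₀`, the same holds near `(θ₀, d)`, so every menu meeting that
neighbourhood of `d` has value `> r`. Hence `{U* ≤ U}` is closed, and membership `d ∈ D` is a
closed condition thanks to the miss sets `W⁺` and regularity of `C`. Given `d ∈ D` the
inequality `U* ≤ U` means `d` is a maximiser, so the graph of `Φ` is the intersection of these
two closed sets; its slices `Φ(θ, D)` are closed in the compact space `C`, and nonempty because
a continuous function attains its maximum on the compact set `D`.
-/

open Set Filter Topology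

namespace CL

variable {C : Type*} [TopologicalSpace C]

theorem isOpen_setOf_inter_nonempty {V : Set C} (hV : IsOpen V) :
    IsOpen {A : CL C | (A.1 ∩ V).Nonempty} := by
  rcases V.eq_empty_or_nonempty with rfl | hne
  · simp
  · exact TopologicalSpace.isOpen_generateFrom_of_mem (Or.inl ⟨V, hV, hne, rfl⟩)

theorem isOpen_setOf_subset {W : Set C} (hW : IsOpen W) : IsOpen {A : CL C | A.1 ⊆ W} := by
  rcases W.eq_empty_or_nonempty with rfl | hne
  · simp only [subset_empty_iff, fun A : CL C => A.2.1.ne_empty, ofPred_false, isOpen_empty]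
  · exact TopologicalSpace.isOpen_generateFrom_of_mem (Or.inr ⟨W, hW, hne, rfl⟩)

theorem isClosed_setOf_mem [RegularSpace C] : IsClosed {p : CL C × C | p.2 ∈ p.1.1} := by
  refine isOpen_compl_iff.mp (isOpen_iff_mem_nhds.mpr ?_)
  rintro ⟨D, d⟩ (hd : d ∉ D.1)
  obtain ⟨K, hK, hKclosed, hKD⟩ :=
    exists_mem_nhds_isClosed_subset (D.2.2.isOpen_compl.mem_nhds hd)
  have hDK : {A : CL C | A.1 ⊆ Kᶜ} ∈ 𝓝 D :=
    (isOpen_setOf_subset hKclosed.isOpen_compl).mem_nhds (subset_compl_comm.mp hKD)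
  filter_upwards [prod_mem_nhds hDK hK] with ⟨A, e⟩ ⟨hAK, heK⟩ heA
  exact hAK heA heK

end CL

section Argmax

variable {Θ C : Type*} [TopologicalSpace Θ] [TopologicalSpace C] [CompactSpace C]
  {U : Θ × C → ℝ}

theorem le_Ustar (hU : Continuous U) {θ : Θ} {D : CL C} {d : C} (hd : d ∈ D.1) :
    U (θ, d) ≤ Ustar U θ D :=
  le_csSup (D.2.2.isCompact.image (hU.comp (Continuous.prodMk_right θ))).bddAbove
    (mem_image_of_mem _ hd)

theorem Phi_nonempty (hU : Continuous U) (θ : Θ) (D : CL C) : (Phi U θ D).Nonempty := by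
  obtain ⟨d, hd, hmax⟩ := D.2.2.isCompact.exists_isMaxOn D.2.1
    (hU.comp (Continuous.prodMk_right θ)).continuousOn
  have hgreatest : IsGreatest ((fun d => U (θ, d)) '' D.1) (U (θ, d)) :=
    ⟨mem_image_of_mem _ hd, forall_mem_image.mpr fun _ hd' => hmax hd'⟩
  exact ⟨d, hd, hgreatest.csSup_eq.symm⟩

theorem lowerSemicontinuous_Ustar (hU : Continuous U) :
    LowerSemicontinuous fun p : Θ × CL C => Ustar U p.1 p.2 := by
  rintro ⟨θ₀, D₀⟩ r (hr : r < Ustar U θ₀ D₀)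
  obtain ⟨d, hdD, hd⟩ := Phi_nonempty hU θ₀ D₀
  obtain ⟨P, V, hP, hV, hθP, hdV, hPV⟩ :=
    isOpen_prod_iff.mp (isOpen_Ioi.preimage hU) θ₀ d (show r < U (θ₀, d) from hd ▸ hr)
  have hD₀V : {A : CL C | (A.1 ∩ V).Nonempty} ∈ 𝓝 D₀ :=
    (CL.isOpen_setOf_inter_nonempty hV).mem_nhds ⟨d, hdD, hdV⟩
  filter_upwards [prod_mem_nhds (hP.mem_nhds hθP) hD₀V] with ⟨θ, D⟩ ⟨hθ, e, heD, heV⟩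
  exact (hPV (mk_mem_prod hθ heV) : r < U (θ, e)).trans_le (le_Ustar hU heD)

theorem isClosed_setOf_Ustar_le (hU : Continuous U) :
    IsClosed {p : (Θ × CL C) × C | Ustar U p.1.1 p.1.2 ≤ U (p.1.1, p.2)} := by
  have hlsc : LowerSemicontinuous fun p : (Θ × CL C) × C =>
      Ustar U p.1.1 p.1.2 + -U (p.1.1, p.2) :=
    ((lowerSemicontinuous_Ustar hU).comp continuous_fst).add
      (hU.comp (continuous_fst.fst.prodMk continuous_snd)).neg.lowerSemicontinuous
  simpa only [← sub_eq_add_neg, preimage, mem_Iic, sub_nonpos] using hlsc.isClosed_preimage 0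

theorem graph_Phi_eq (hU : Continuous U) :
    {p : (Θ × CL C) × C | p.2 ∈ Phi U p.1.1 p.1.2} =
      Prod.map Prod.snd id ⁻¹' {q : CL C × C | q.2 ∈ q.1.1} ∩
        {p | Ustar U p.1.1 p.1.2 ≤ U (p.1.1, p.2)} := by
  ext ⟨⟨θ, D⟩, d⟩
  exact and_congr_right fun hd => ⟨ge_of_eq, (le_Ustar hU hd).antisymm⟩

end Argmax

theorem Phi_upperHemicontinuous_general {Θ C : Type*}
    [TopologicalSpace C] [CompactSpace C] [T2Space C]
    [TopologicalSpace Θ]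
    (U : Θ × C → ℝ) (hU : Continuous U) :
    (∀ (θ : Θ) (D : CL C), (Phi U θ D).Nonempty ∧ IsCompact (Phi U θ D)) ∧
      IsClosed {p : (Θ × CL C) × C | p.2 ∈ Phi U p.1.1 p.1.2} := by
  have hgraph : IsClosed {p : (Θ × CL C) × C | p.2 ∈ Phi U p.1.1 p.1.2} := by
    rw [graph_Phi_eq hU]
    exact (CL.isClosed_setOf_mem.preimage (continuous_snd.prodMap continuous_id)).inter
      (isClosed_setOf_Ustar_le hU)
  refine ⟨fun θ D => ⟨Phi_nonempty hU θ D, ?_⟩, hgraph⟩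
  exact (hgraph.preimage (Continuous.prodMk_right (θ, D))).isCompact

/-- If `C` and `Θ` are compact Hausdorff and `U : Θ × C → ℝ` is jointly continuous,
then the argmax correspondence `Φ(θ, D) = argmax_{d ∈ D} U(θ, d)` has nonempty compact
values and is jointly upper hemicontinuous, equivalently (since `C` is compact) it has
closed graph in `(Θ × CL(C)) × C`, where `CL(C)` carries the Fell topology. -/
theorem Phi_upperHemicontinuous {Θ C : Type*}
    [TopologicalSpace C] [CompactSpace C] [T2Space C]
    [TopologicalSpace Θ] [CompactSpace Θ] [T2Space Θ]
    (U : Θ × C → ℝ) (hU : Continuous U) :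
    (∀ (θ : Θ) (D : CL C), (Phi U θ D).Nonempty ∧ IsCompact (Phi U θ D)) ∧
      IsClosed {p : (Θ × CL C) × C | p.2 ∈ Phi U p.1.1 p.1.2} :=
  Phi_upperHemicontinuous_general U hU
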